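/- arXiv:1612.02799 — 2 statements merged into one kernel-verified Lean document; each statement's English description precedes it below -/
import Mathlib

section
/- Let s, z ∈ ℂ with s ≠ 0, z ≠ 2, and s² + s^{-2} ≠ z. Let m be an integer and suppose (s² + s^{-2} + 2 − z)·(S_m(z)² + S_{m-1}(z)²) − 2·(s² + s^{-2})·S_m(z)·S_{m-1}(z) = z. Then (S_m(z) − S_{m-1}(z))² = (z − 2)/(s² + s^{-2} − z). -/
/-
The Chebyshev recurrence preserves the quadratic form `a² + b² - z a b` on consecutive pairs
`(S j, S (j - 1))`, and at `j = 0` this form equals `1`. Substituting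
`S m² + S (m-1)² = 1 + z S m S (m-1)` into the hypothesis leaves
`(s² + s⁻² - z) (S m - S (m-1))² = z - 2`.
-/

section ChebyshevRecurrence

variable {R : Type*} [CommRing R] {z : R} {S : ℤ → R}

lemma chebyshev_quadForm_succ (hrec : ∀ j : ℤ, S j = z * S (j - 1) - S (j - 2)) (j : ℤ) :
    S (j + 1) ^ 2 + S j ^ 2 - z * S (j + 1) * S j =
      S j ^ 2 + S (j - 1) ^ 2 - z * S j * S (j - 1) := by
  have h := hrec (j + 1)
  rw [add_sub_cancel_right, show j + 1 - 2 = j - 1 by ring] at h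
  rw [h]
  ring

lemma chebyshev_quadForm_eq_one (hS0 : S 0 = 1) (hS1 : S 1 = z)
    (hrec : ∀ j : ℤ, S j = z * S (j - 1) - S (j - 2)) (j : ℤ) :
    S j ^ 2 + S (j - 1) ^ 2 - z * S j * S (j - 1) = 1 := by
  have hSneg1 : S (-1) = 0 := by
    have h := hrec 1
    norm_num [hS0, hS1] at h
    linear_combination h
  induction j using Int.induction_on with
  | zero => simp [hS0, hSneg1]
  | succ i ih => rwa [add_sub_cancel_right, chebyshev_quadForm_succ hrec]
  | pred i ih => rwa [← chebyshev_quadForm_succ hrec, sub_add_cancel]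

end ChebyshevRecurrence

theorem stmt7_general (s z : ℂ)
    (hsz : s ^ (2 : ℤ) + s ^ (-2 : ℤ) ≠ z)
    (S : ℤ → ℂ) (hS0 : S 0 = 1) (hS1 : S 1 = z)
    (hrec : ∀ j : ℤ, S j = z * S (j - 1) - S (j - 2))
    (m : ℤ)
    (heq : (s ^ (2 : ℤ) + s ^ (-2 : ℤ) + 2 - z) * ((S m) ^ 2 + (S (m - 1)) ^ 2)
      - 2 * (s ^ (2 : ℤ) + s ^ (-2 : ℤ)) * S m * S (m - 1) = z) :
    (S m - S (m - 1)) ^ 2 = (z - 2) / (s ^ (2 : ℤ) + s ^ (-2 : ℤ) - z) := by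
  have hform := chebyshev_quadForm_eq_one hS0 hS1 hrec m
  rw [eq_div_iff (sub_ne_zero.mpr hsz)]
  linear_combination heq - 2 * hform

theorem stmt7 (s z : ℂ) (hs : s ≠ 0) (hz : z ≠ 2)
    (hsz : s ^ (2 : ℤ) + s ^ (-2 : ℤ) ≠ z)
    (S : ℤ → ℂ) (hS0 : S 0 = 1) (hS1 : S 1 = z)
    (hrec : ∀ j : ℤ, S j = z * S (j - 1) - S (j - 2))
    (m : ℤ)
    (heq : (s ^ (2 : ℤ) + s ^ (-2 : ℤ) + 2 - z) * ((S m) ^ 2 + (S (m - 1)) ^ 2)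
      - 2 * (s ^ (2 : ℤ) + s ^ (-2 : ℤ)) * S m * S (m - 1) = z) :
    (S m - S (m - 1)) ^ 2 = (z - 2) / (s ^ (2 : ℤ) + s ^ (-2 : ℤ) - z) :=
  stmt7_general s z hsz S hS0 hS1 hrec m heq
end

section
/- Let s, z ∈ ℂ with s ≠ 0, z ≠ 2, and s² + s^{-2} ≠ z. Let m be an integer and suppose (s² + s^{-2} + 2 − z)·(S_m(z)² + S_{m-1}(z)²) − 2·(s² + s^{-2})·S_m(z)·S_{m-1}(z) = z. Then (S_m(z) − S_{m-1}(z))²·(S_m(z) − s²·S_{m-1}(z))·(S_m(z) − s^{-2}·S_{m-1}(z)) = 1. -/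
/-!
Write `a = S_m(z)`, `b = S_{m-1}(z)` and `w = s² + s⁻²`. The three-term recurrence preserves
`S_n² + S_{n-1}² - z S_n S_{n-1}`, which equals `1` at `n = 0`; hence `a² + b² = 1 + z a b`.
With this, the hypothesis says `(z - 2)(z - w) a b = w + 2 - 2z`, while the left-hand side of the
conclusion is `(a - b)² (a² - w a b + b²) = (1 + (z - 2) a b)(1 + (z - w) a b)`, which
expands to `1 + a b ((2z - w - 2) + (z - 2)(z - w) a b) = 1`.
-/

section ChebyshevRecurrence

variable {R : Type*} [CommRing R] {z : R} {S : ℤ → R}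

theorem chebyshev_invariant_succ (hrec : ∀ j, S j = z * S (j - 1) - S (j - 2)) (n : ℤ) :
    S (n + 1) ^ 2 + S n ^ 2 - z * S (n + 1) * S n
      = S n ^ 2 + S (n - 1) ^ 2 - z * S n * S (n - 1) := by
  have h := hrec (n + 1)
  rw [add_sub_cancel_right, show n + 1 - 2 = n - 1 by ring] at h
  linear_combination (S (n + 1) - S (n - 1)) * h

theorem chebyshev_invariant_eq_one (hS0 : S 0 = 1) (hS1 : S 1 = z)
    (hrec : ∀ j, S j = z * S (j - 1) - S (j - 2)) (n : ℤ) :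
    S n ^ 2 + S (n - 1) ^ 2 - z * S n * S (n - 1) = 1 := by
  have hS_neg_one : S (-1) = 0 := by
    have h := hrec 1
    norm_num [hS0, hS1] at h
    linear_combination h
  induction n using Int.induction_on with
  | zero => simp [hS0, hS_neg_one]
  | succ k ih => rwa [add_sub_cancel_right, chebyshev_invariant_succ hrec]
  | pred k ih =>
    rw [← ih, ← chebyshev_invariant_succ hrec, sub_add_cancel]

end ChebyshevRecurrence

theorem sub_mul_sub_mul_of_mul_eq_one {R : Type*} [CommRing R] {t u : R} (htu : t * u = 1)
    (a b : R) :
    (a - t * b) * (a - u * b) = a ^ 2 - (t + u) * a * b + b ^ 2 := by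
  linear_combination b ^ 2 * htu

theorem sub_sq_mul_eq_one_of_chebyshev_invariant {R : Type*} [CommRing R] {a b z w : R}
    (hI : a ^ 2 + b ^ 2 - z * a * b = 1)
    (heq : (w + 2 - z) * (a ^ 2 + b ^ 2) - 2 * w * a * b = z) :
    (a - b) ^ 2 * (a ^ 2 - w * a * b + b ^ 2) = 1 := by
  have hab : (z - 2) * (z - w) * (a * b) = w + 2 - 2 * z := by
    linear_combination (w + 2 - z) * hI - heq
  linear_combination (a * b) * hab + (a ^ 2 + b ^ 2 + (z - w - 2) * (a * b) + 1) * hI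

theorem stmt9_general (s z : ℂ) (hs : s ≠ 0)
    (S : ℤ → ℂ) (hS0 : S 0 = 1) (hS1 : S 1 = z)
    (hrec : ∀ j : ℤ, S j = z * S (j - 1) - S (j - 2))
    (m : ℤ)
    (heq : (s ^ (2 : ℤ) + s ^ (-2 : ℤ) + 2 - z) * ((S m) ^ 2 + (S (m - 1)) ^ 2)
      - 2 * (s ^ (2 : ℤ) + s ^ (-2 : ℤ)) * S m * S (m - 1) = z) :
    (S m - S (m - 1)) ^ 2 * (S m - s ^ (2 : ℤ) * S (m - 1))
      * (S m - s ^ (-2 : ℤ) * S (m - 1)) = 1 := by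
  have hinv : s ^ (2 : ℤ) * s ^ (-2 : ℤ) = 1 := by
    rw [zpow_neg, mul_inv_cancel₀ (zpow_ne_zero _ hs)]
  rw [mul_assoc, sub_mul_sub_mul_of_mul_eq_one hinv]
  exact sub_sq_mul_eq_one_of_chebyshev_invariant
    (chebyshev_invariant_eq_one hS0 hS1 hrec m) heq

theorem stmt9 (s z : ℂ) (hs : s ≠ 0) (hz : z ≠ 2)
    (hsz : s ^ (2 : ℤ) + s ^ (-2 : ℤ) ≠ z)
    (S : ℤ → ℂ) (hS0 : S 0 = 1) (hS1 : S 1 = z)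
    (hrec : ∀ j : ℤ, S j = z * S (j - 1) - S (j - 2))
    (m : ℤ)
    (heq : (s ^ (2 : ℤ) + s ^ (-2 : ℤ) + 2 - z) * ((S m) ^ 2 + (S (m - 1)) ^ 2)
      - 2 * (s ^ (2 : ℤ) + s ^ (-2 : ℤ)) * S m * S (m - 1) = z) :
    (S m - S (m - 1)) ^ 2 * (S m - s ^ (2 : ℤ) * S (m - 1))
      * (S m - s ^ (-2 : ℤ) * S (m - 1)) = 1 :=
  stmt9_general s z hs S hS0 hS1 hrec m heq
end
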